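/- Let (f_t) and (π_t) be sequences of probability measures and (h_t) the sequence defined by h_t = T_t^{(n_t)} h_{t−1} with h_0 = π_0, where each T_t satisfies the contraction d_TV(T_t^{(n_t)} μ, f_t) ≤ ε · d_TV(μ, f_t) for all probability measures μ, for a fixed ε ∈ (0,1). Then d_TV(h_t, f_t) ≤ Σ_{l=1}^{t} ε^{t+1−l} d_TV(f_l, f_{l−1}) (taking f_0 = π_0). In particular, if d_TV(f_l, f_{l−1}) → 0 then d_TV(h_t, f_t) → 0. -/

import Mathlib

/-!
Each step contracts the distance to the current target by `ε`, but the target itself moves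
from `f_t` to `f_{t+1}`; by the triangle inequality the error `x_t = d_TV(h_t, f_t)` therefore
obeys `x_{t+1} ≤ ε (x_t + d_TV(f_{t+1}, f_t))` with `x_0 = 0`, and unrolling this recursion
gives the bound. The bound is the convolution of a null sequence with the summable sequence
`ε^k`, which tends to zero by dominated convergence for series (Tannery's theorem).
-/

open MeasureTheory ProbabilityTheory Filter

/-- Total variation distance between two measures. -/
noncomputable def dTV {E : Type*} [MeasurableSpace E] (μ ν : Measure E) : ℝ :=
  ⨆ A : {s : Set E // MeasurableSet s}, |(μ A.1).toReal - (ν A.1).toReal|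

/-- The sequence `h_t = S_t h_{t-1}` with `h_0 = π₀`, where `S t` represents the kernel
`T_t^{(n_t)}`. -/
noncomputable def chainSeq {E : Type*} [MeasurableSpace E] (π₀ : Measure E)
    (S : ℕ → Kernel E E) : ℕ → Measure E
  | 0 => π₀
  | t + 1 => (chainSeq π₀ S t).bind (S (t + 1))

open Topology Finset

section TotalVariation

variable {E : Type*} [MeasurableSpace E]

lemma dTV_nonneg (μ ν : Measure E) : 0 ≤ dTV μ ν :=
  Real.iSup_nonneg fun _ => abs_nonneg _

lemma dTV_self (μ : Measure E) : dTV μ μ = 0 := by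
  simp [dTV]

lemma dTV_comm (μ ν : Measure E) : dTV μ ν = dTV ν μ := by
  simp only [dTV, abs_sub_comm]

lemma abs_measureReal_sub_le (μ ν : Measure E) [IsFiniteMeasure μ] [IsFiniteMeasure ν]
    (s : Set E) : |μ.real s - ν.real s| ≤ μ.real Set.univ + ν.real Set.univ := by
  have hμ := measureReal_mono (μ := μ) (Set.subset_univ s)
  have hν := measureReal_mono (μ := ν) (Set.subset_univ s)
  rw [abs_le]
  constructor <;> linarith [measureReal_nonneg (μ := μ) (s := s),
    measureReal_nonneg (μ := ν) (s := s)]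

lemma bddAbove_range_abs_measureReal_sub (μ ν : Measure E) [IsFiniteMeasure μ]
    [IsFiniteMeasure ν] :
    BddAbove (Set.range fun A : {s : Set E // MeasurableSet s} => |μ.real A.1 - ν.real A.1|) :=
  ⟨_, Set.forall_mem_range.2 fun A => abs_measureReal_sub_le μ ν A.1⟩

lemma dTV_triangle (μ ν κ : Measure E) [IsFiniteMeasure μ] [IsFiniteMeasure ν]
    [IsFiniteMeasure κ] : dTV μ κ ≤ dTV μ ν + dTV ν κ :=
  ciSup_le fun A => (abs_sub_le _ _ _).trans <| add_le_add
    (le_ciSup (bddAbove_range_abs_measureReal_sub μ ν) A)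
    (le_ciSup (bddAbove_range_abs_measureReal_sub ν κ) A)

end TotalVariation

lemma isProbabilityMeasure_chainSeq {E : Type*} [MeasurableSpace E] (π₀ : Measure E)
    [IsProbabilityMeasure π₀] (S : ℕ → Kernel E E) [∀ t, IsMarkovKernel (S t)] :
    ∀ t, IsProbabilityMeasure (chainSeq π₀ S t)
  | 0 => ‹_›
  | t + 1 =>
    have := isProbabilityMeasure_chainSeq π₀ S t
    inferInstanceAs (IsProbabilityMeasure (S (t + 1) ∘ₘ chainSeq π₀ S t))

lemma sum_Icc_succ_pow_mul (ε : ℝ) (a : ℕ → ℝ) (t : ℕ) :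
    ∑ l ∈ Icc 1 (t + 1), ε ^ (t + 1 + 1 - l) * a l
      = ε * (∑ l ∈ Icc 1 t, ε ^ (t + 1 - l) * a l + a (t + 1)) := by
  rw [sum_Icc_succ_top (by omega), mul_add, mul_sum, Nat.add_sub_cancel_left, pow_one]
  congr 1
  refine sum_congr rfl fun l hl => ?_
  rw [show t + 1 + 1 - l = t + 1 - l + 1 by grind, pow_succ']
  ring

lemma le_sum_pow_mul_of_le_mul_add {ε : ℝ} (hε : 0 ≤ ε) {x a : ℕ → ℝ} (hx₀ : x 0 ≤ 0)
    (hstep : ∀ t, x (t + 1) ≤ ε * (x t + a (t + 1))) (t : ℕ) :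
    x t ≤ ∑ l ∈ Icc 1 t, ε ^ (t + 1 - l) * a l := by
  induction t with
  | zero => simpa using hx₀
  | succ t ih =>
    rw [sum_Icc_succ_pow_mul]
    exact (hstep t).trans (by gcongr)

lemma sum_Icc_pow_mul_eq_tsum (ε : ℝ) (a : ℕ → ℝ) (t : ℕ) :
    ∑ l ∈ Icc 1 t, ε ^ (t + 1 - l) * a l
      = ∑' k, if k < t then ε ^ (k + 1) * a (t - k) else 0 := by
  rw [tsum_eq_sum (s := range t) fun k hk => if_neg (by simpa using hk)]
  refine sum_nbij' (fun l => t - l) (fun k => t - k) ?_ ?_ ?_ ?_ ?_ <;>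
    intro l hl <;> simp only [mem_Icc, mem_range] at hl ⊢
  · omega
  · omega
  · omega
  · omega
  · rw [if_pos (by omega), show t + 1 - l = t - l + 1 by omega, Nat.sub_sub_self hl.2]

lemma tendsto_sum_Icc_pow_mul_of_tendsto_zero {ε : ℝ} (hε₀ : 0 ≤ ε) (hε₁ : ε < 1)
    {a : ℕ → ℝ} (ha : Tendsto a atTop (𝓝 0)) :
    Tendsto (fun t => ∑ l ∈ Icc 1 t, ε ^ (t + 1 - l) * a l) atTop (𝓝 0) := by
  obtain ⟨C, hC⟩ := isBounded_iff_forall_norm_le.1 (Metric.isBounded_range_of_tendsto a ha)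
  have hterm (k : ℕ) : Tendsto (fun t => if k < t then ε ^ (k + 1) * a (t - k) else 0)
      atTop (𝓝 0) := by
    have := (ha.comp (tendsto_sub_atTop_nat k)).const_mul (ε ^ (k + 1))
    rw [mul_zero] at this
    exact this.congr' ((eventually_gt_atTop k).mono fun t ht => (if_pos ht).symm)
  have hbound : ∀ t k, ‖if k < t then ε ^ (k + 1) * a (t - k) else 0‖ ≤ ε ^ (k + 1) * C := by
    intro t k
    split_ifs
    · rw [norm_mul, norm_pow, Real.norm_of_nonneg hε₀]
      exact mul_le_mul_of_nonneg_left (hC _ ⟨t - k, rfl⟩) (by positivity)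
    · simpa using mul_nonneg (pow_nonneg hε₀ (k + 1)) ((norm_nonneg _).trans (hC _ ⟨0, rfl⟩))
  have hsum : Summable fun k => ε ^ (k + 1) * C :=
    ((summable_geometric_of_lt_one hε₀ hε₁).comp_injective (add_left_injective 1)).mul_right C
  simpa [sum_Icc_pow_mul_eq_tsum] using
    tendsto_tsum_of_dominated_convergence hsum hterm (Eventually.of_forall hbound)

/-- If each step kernel contracts towards `f t` by a factor `ε ∈ (0,1)`, then the
distance `d_TV(h_t, f_t)` is bounded by the convolution sum
`Σ_{l=1}^{t} ε^{t+1−l} d_TV(f_l, f_{l−1})` (with `f 0 = π₀`); in particular, if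
`d_TV(f_l, f_{l−1}) → 0` then `d_TV(h_t, f_t) → 0`. -/
theorem chain_contraction_bound {E : Type*} [MeasurableSpace E]
    (S : ℕ → Kernel E E) (hS : ∀ t, IsMarkovKernel (S t))
    (f : ℕ → Measure E) (hf : ∀ t, IsProbabilityMeasure (f t))
    (ε : ℝ) (hε : ε ∈ Set.Ioo (0:ℝ) 1)
    (hcontr : ∀ t ≥ 1, ∀ μ : Measure E, IsProbabilityMeasure μ →
      dTV (μ.bind (S t)) (f t) ≤ ε * dTV μ (f t)) :
    (∀ t : ℕ, dTV (chainSeq (f 0) S t) (f t) ≤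
        ∑ l ∈ Finset.Icc 1 t, ε ^ (t + 1 - l) * dTV (f l) (f (l - 1)))
    ∧ (Tendsto (fun l => dTV (f l) (f (l - 1))) atTop (nhds 0) →
        Tendsto (fun t => dTV (chainSeq (f 0) S t) (f t)) atTop (nhds 0)) := by
  obtain ⟨hε₀, hε₁⟩ := hε
  have hchain := isProbabilityMeasure_chainSeq (f 0) S
  have hstep (t : ℕ) : dTV (chainSeq (f 0) S (t + 1)) (f (t + 1))
      ≤ ε * (dTV (chainSeq (f 0) S t) (f t) + dTV (f (t + 1)) (f t)) :=
    calc _ ≤ ε * dTV (chainSeq (f 0) S t) (f (t + 1)) := hcontr (t + 1) t.succ_pos _ (hchain t)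
      _ ≤ _ := by
        gcongr
        rw [dTV_comm (f (t + 1))]
        exact dTV_triangle _ _ _
  have hbound := le_sum_pow_mul_of_le_mul_add (x := fun t => dTV (chainSeq (f 0) S t) (f t))
    (a := fun l => dTV (f l) (f (l - 1))) hε₀.le (dTV_self (f 0)).le hstep
  exact ⟨hbound, fun h => squeeze_zero (fun _ => dTV_nonneg _ _) hbound
    (tendsto_sum_Icc_pow_mul_of_tendsto_zero hε₀.le hε₁ h)⟩
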